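/- Let q ∈ (0,1) be real, and let a, b, c be natural numbers with a ≤ b and c ≤ b. Then for every natural number s with max(0, c−a) ≤ s ≤ min(c, b−a), one has q^{a s} · (q^{b−a}; q^{−1})_s · (q^{a}; q^{−1})_{c−s} / (q^{b}; q^{−1})_c · binom(c,s)_{q^{−1}} = q^{s(s+a−c)} · binom(b,a)_q^{−1} · binom(c,s)_q · binom(b−c, s+a−c)_q. (Consequently, if X is distributed according to the q-binomial (q-Hahn) distribution φ_{q^{−1}, q^a, q^b}(·|c), then c − X is distributed according to qHyp(c, b−c, a).) -/
import Mathlib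


open Finset

/-- `(x; q)_k` : the finite q-Pochhammer symbol `∏_{i=0}^{k-1} (1 - x qⁱ)`. -/
noncomputable def qPoch (q x : ℝ) (k : ℕ) : ℝ := ∏ i ∈ Finset.range k, (1 - x * q ^ i)

/-- `(x; q)_∞` : the infinite q-Pochhammer symbol `∏_{i=0}^{∞} (1 - x qⁱ)`. -/
noncomputable def qPochInf (q x : ℝ) : ℝ := ∏' i : ℕ, (1 - x * q ^ i)

/-- `(n)_q := (q; q)_n = ∏_{i=1}^{n} (1 - qⁱ)`. -/
noncomputable def qFac (q : ℝ) (n : ℕ) : ℝ := qPoch q q n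

/-- The q-binomial coefficient `binom(n,k)_q = (n)_q / ((k)_q (n-k)_q)`. -/
noncomputable def qBinom (q : ℝ) (n k : ℕ) : ℝ := qFac q n / (qFac q k * qFac q (n - k))

/-- triangular numbers -/
private def tri : ℕ → ℕ
  | 0 => 0
  | n + 1 => tri n + (n + 1)

private lemma tri_add (s t : ℕ) : tri (s + t) = tri s + tri t + s * t := by
  induction t with
  | zero => simp [tri]
  | succ t ih =>
    rw [Nat.add_succ]
    simp only [tri]
    rw [ih]
    ring

private lemma qPoch_succ (q x : ℝ) (k : ℕ) :
    qPoch q x (k + 1) = qPoch q x k * (1 - x * q ^ k) := by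
  simp [qPoch, Finset.prod_range_succ]

private lemma qFac_succ (q : ℝ) (n : ℕ) : qFac q (n + 1) = qFac q n * (1 - q ^ (n + 1)) := by
  rw [qFac, qPoch_succ, ← pow_succ']
  rfl

private lemma qFac_pos {q : ℝ} (hq : q ∈ Set.Ioo (0 : ℝ) 1) (n : ℕ) : 0 < qFac q n := by
  induction n with
  | zero => simp [qFac, qPoch]
  | succ n ih =>
    rw [qFac_succ]
    have h1 : q ^ (n + 1) < 1 := pow_lt_one₀ hq.1.le hq.2 (Nat.succ_ne_zero n)
    nlinarith

private lemma qFac_inv {q : ℝ} (hq0 : q ≠ 0) (n : ℕ) :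
    qFac q⁻¹ n * q ^ tri n = (-1) ^ n * qFac q n := by
  induction n with
  | zero => simp [qFac, qPoch, tri]
  | succ n ih =>
    rw [qFac_succ, qFac_succ]
    have h1 : (q⁻¹) ^ (n + 1) * q ^ (n + 1) = 1 := by
      rw [← mul_pow, inv_mul_cancel₀ hq0, one_pow]
    have h2 : tri (n + 1) = tri n + (n + 1) := rfl
    rw [h2, pow_add q (tri n) (n + 1)]
    calc qFac q⁻¹ n * (1 - q⁻¹ ^ (n + 1)) * (q ^ tri n * q ^ (n + 1))
        = (qFac q⁻¹ n * q ^ tri n) * ((1 - q⁻¹ ^ (n + 1)) * q ^ (n + 1)) := by ring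
      _ = (-1) ^ n * qFac q n * (q ^ (n + 1) - q⁻¹ ^ (n + 1) * q ^ (n + 1)) := by rw [ih]; ring
      _ = (-1) ^ n * qFac q n * (q ^ (n + 1) - 1) := by rw [h1]
      _ = (-1) ^ (n + 1) * (qFac q n * (1 - q ^ (n + 1))) := by rw [pow_succ]; ring

private lemma qPoch_inv_mul {q : ℝ} (hq0 : q ≠ 0) :
    ∀ k e : ℕ, qFac q e * qPoch q⁻¹ (q ^ (k + e)) k = qFac q (k + e) := by
  intro k
  induction k with
  | zero => intro e; simp [qPoch]
  | succ k ih =>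
    intro e
    rw [qPoch_succ]
    have h1 : q ^ (k + 1 + e) * (q⁻¹) ^ k = q ^ (e + 1) := by
      have hx : q ^ (k + 1 + e) = q ^ (e + 1) * q ^ k := by
        rw [← pow_add]; congr 1; omega
      rw [inv_pow, hx, mul_assoc, mul_inv_cancel₀ (pow_ne_zero k hq0), mul_one]
    have h2 : k + 1 + e = k + (e + 1) := by omega
    rw [h1, h2]
    calc qFac q e * (qPoch q⁻¹ (q ^ (k + (e + 1))) k * (1 - q ^ (e + 1)))
        = (qFac q e * (1 - q ^ (e + 1))) * qPoch q⁻¹ (q ^ (k + (e + 1))) k := by ring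
      _ = qFac q (e + 1) * qPoch q⁻¹ (q ^ (k + (e + 1))) k := by rw [qFac_succ]
      _ = qFac q (k + (e + 1)) := ih (e + 1)

private lemma qPoch_inv_div {q : ℝ} (hq : q ∈ Set.Ioo (0 : ℝ) 1) (k e : ℕ) :
    qPoch q⁻¹ (q ^ (k + e)) k = qFac q (k + e) / qFac q e := by
  rw [eq_div_iff (qFac_pos hq e).ne', mul_comm]
  exact qPoch_inv_mul hq.1.ne' k e

private lemma qFac_inv_div {q : ℝ} (hq : q ∈ Set.Ioo (0 : ℝ) 1) (n : ℕ) :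
    qFac q⁻¹ n = (-1) ^ n * qFac q n / q ^ tri n := by
  rw [eq_div_iff (pow_ne_zero _ hq.1.ne')]
  exact qFac_inv hq.1.ne' n

private lemma qBinom_inv {q : ℝ} (hq : q ∈ Set.Ioo (0 : ℝ) 1) (s t : ℕ) :
    qBinom q⁻¹ (s + t) s = qBinom q (s + t) s / q ^ (s * t) := by
  have hst : s + t - s = t := by omega
  rw [qBinom, qBinom, hst, qFac_inv_div hq, qFac_inv_div hq, qFac_inv_div hq, tri_add]
  have hq0 : q ≠ 0 := hq.1.ne'
  have h1 := (qFac_pos hq s).ne'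
  have h2 := (qFac_pos hq t).ne'
  have h3 := (qFac_pos hq (s + t)).ne'
  field_simp
  ring

/-- **From the q-binomial (q-Hahn) distribution to the q-hypergeometric distribution.**
For `q ∈ (0,1)` and naturals `a ≤ b`, `c ≤ b`, and any natural `s` with
`max(0, c-a) ≤ s ≤ min(c, b-a)`, the pmf of the q-binomial distribution
`φ_{q⁻¹, q^a, q^b}(s | c) = (q^a)^s (q^{b-a}; q⁻¹)_s (q^a; q⁻¹)_{c-s} / (q^b; q⁻¹)_c ·
binom(c,s)_{q⁻¹}` equals `q^{s(s+a-c)} binom(b,a)_q⁻¹ binom(c,s)_q binom(b-c, s+a-c)_q`.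
Consequently, if `X ~ φ_{q⁻¹, q^a, q^b}(·|c)` then `c - X ~ qHyp(c, b-c, a)`. -/
theorem qbinomial_to_qhyp (q : ℝ) (hq : q ∈ Set.Ioo (0 : ℝ) 1) (a b c : ℕ)
    (hab : a ≤ b) (hcb : c ≤ b) (s : ℕ) (hs1 : c - a ≤ s) (hs2 : s ≤ min c (b - a)) :
    q ^ (a * s) * qPoch q⁻¹ (q ^ (b - a)) s * qPoch q⁻¹ (q ^ a) (c - s) / qPoch q⁻¹ (q ^ b) c
        * qBinom q⁻¹ c s
      = q ^ (s * (s + a - c)) * (qBinom q b a)⁻¹ * qBinom q c s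
        * qBinom q (b - c) (s + a - c) := by
  obtain ⟨hsc, hsba⟩ := le_min_iff.mp hs2
  obtain ⟨t, rfl⟩ : ∃ t, c = s + t := ⟨c - s, by omega⟩
  obtain ⟨d, rfl⟩ : ∃ d, a = t + d := ⟨s + a - (s + t), by omega⟩
  obtain ⟨e, rfl⟩ : ∃ e, b = s + t + (d + e) := ⟨b - (s + t + d), by omega⟩
  rw [show s + t + (d + e) - (t + d) = s + e from by omega,
      show s + t - s = t from by omega,
      show s + (t + d) - (s + t) = d from by omega,
      show s + t + (d + e) - (s + t) = d + e from by omega,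
      show s + t + (d + e) = (s + t) + (d + e) from by omega]
  rw [qPoch_inv_div hq s e, qPoch_inv_div hq t d, qPoch_inv_div hq (s + t) (d + e),
      qBinom_inv hq s t]
  rw [qBinom, qBinom, qBinom,
      show s + t - s = t from by omega,
      show s + t + (d + e) - (t + d) = s + e from by omega,
      show d + e - d = e from by omega]
  have hq0 : q ≠ 0 := hq.1.ne'
  have h1 := (qFac_pos hq s).ne'
  have h2 := (qFac_pos hq t).ne'
  have h3 := (qFac_pos hq d).ne'
  have h4 := (qFac_pos hq e).ne'
  have h5 := (qFac_pos hq (s + t)).ne'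
  have h6 := (qFac_pos hq (s + e)).ne'
  have h7 := (qFac_pos hq (t + d)).ne'
  have h8 := (qFac_pos hq (d + e)).ne'
  have h9 := (qFac_pos hq (s + t + (d + e))).ne'
  rw [show (t + d) * s = s * d + s * t from by ring, pow_add]
  field_simp
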